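/- arXiv:1106.2408 — 3 statements merged into one kernel-verified Lean document; each statement's English description precedes it below -/
import Mathlib

section
/- Let e_1, …, e_{2g+1} be pairwise distinct complex numbers, let f(x) = 4∏_{k=1}^{2g+1}(x−e_k) = 4x^{2g+1} + λ_{2g}x^{2g} + … + λ_0, and let F be the Kleinian 2-polar of these coefficients. Then for any i ≠ j, F(e_i,e_j)/(4(e_i−e_j)²) = Σ_{n=0}^{g−1} (e_i e_j)^n S^{(ij)}_{2g−2n−1}, where S^{(ij)}_k denotes the elementary symmetric polynomial of degree k in the 2g−1 numbers {e_1,…,e_{2g+1}} \ {e_i, e_j}. -/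
/-!
With `a = e i`, `b = e j` and `P = ∏_{m ≠ i, j} (X - e m)`, the curve polynomial is
`4 (X - a)(X - b) P`. The 2-polar at `(x, z)` is linear in the polynomial, and on
`(X - x)(X - z) h` it equals `-(x - z)² ∑ₖ h_{2k} (xz)^k`: the odd monomials of `h` contribute
nothing and `X ^ (2k)` contributes `(4xz - (x + z)²)(xz)^k`. Since `P` has odd degree `2g - 1`,
Vieta gives `P_{2n} = -S^{(ij)}_{2g-2n-1}`.
-/

open Finset Polynomial

/-- Elementary symmetric function of degree `n` of the values of `f` on `s`. -/
noncomputable def esymm {ι : Type*} [DecidableEq ι] (s : Finset ι) (n : ℕ) (f : ι → ℂ) : ℂ :=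
  ∑ t ∈ Finset.powersetCard n s, ∏ i ∈ t, f i

theorem Finset.sum_range_two_mul {M : Type*} [AddCommMonoid M] (f : ℕ → M) (N : ℕ) :
    ∑ n ∈ range (2 * N), f n = ∑ k ∈ range N, (f (2 * k) + f (2 * k + 1)) := by
  induction N with
  | zero => simp
  | succ N ih =>
    rw [mul_add, mul_one, sum_range_succ, sum_range_succ, sum_range_succ, ih, add_assoc]

theorem Finset.prod_X_sub_C_coeff {R ι : Type*} [CommRing R] (s : Finset ι) (r : ι → R) {k : ℕ}
    (h : k ≤ #s) :
    (∏ i ∈ s, (X - C (r i))).coeff k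
      = (-1) ^ (#s - k) * ∑ t ∈ s.powersetCard (#s - k), ∏ i ∈ t, r i := by
  simp_rw [sub_eq_add_neg, ← map_neg C]
  rw [prod_X_add_C_coeff _ _ h, mul_sum]
  refine sum_congr rfl fun t ht => ?_
  rw [prod_neg, (mem_powersetCard.1 ht).2]

namespace Polynomial

section CommSemiring

variable {R : Type*} [CommSemiring R]

def kleinPolarWeight (x z : R) (n : ℕ) : R :=
  (x * z) ^ (n / 2) * if Even n then 2 else z + x

/-- The Kleinian 2-polar `F(x, z)` of the coefficient sequence `λ` of `p`: it sends `X ^ (2k)`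
to `2 (xz)^k` and `X ^ (2k+1)` to `(xz)^k (z + x)`. -/
noncomputable def kleinPolar (x z : R) : R[X] →ₗ[R] R :=
  lsum fun n => LinearMap.mulRight R (kleinPolarWeight x z n)

/-- `p ↦ ∑ₖ p.coeff (2k) * u ^ k`, the even part of `p` evaluated at a square root of `u`. -/
noncomputable def evenCoeffEval (u : R) : R[X] →ₗ[R] R :=
  lsum fun n => LinearMap.mulRight R (if Even n then u ^ (n / 2) else 0)

theorem kleinPolarWeight_two_mul (x z : R) (k : ℕ) :
    kleinPolarWeight x z (2 * k) = (x * z) ^ k * 2 := by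
  simp [kleinPolarWeight]

theorem kleinPolarWeight_two_mul_add_one (x z : R) (k : ℕ) :
    kleinPolarWeight x z (2 * k + 1) = (x * z) ^ k * (z + x) := by
  simp [kleinPolarWeight, show (2 * k + 1) / 2 = k by omega]

theorem kleinPolar_monomial (x z c : R) (n : ℕ) :
    kleinPolar x z (monomial n c) = c * kleinPolarWeight x z n := by
  simp [kleinPolar]

theorem evenCoeffEval_monomial (u c : R) (n : ℕ) :
    evenCoeffEval u (monomial n c) = c * if Even n then u ^ (n / 2) else 0 := by
  simp [evenCoeffEval]

theorem kleinPolar_eq_sum_range (x z : R) {p : R[X]} {N : ℕ} (hp : p.natDegree < 2 * N) :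
    kleinPolar x z p
      = ∑ k ∈ range N, x ^ k * z ^ k * (2 * p.coeff (2 * k) + p.coeff (2 * k + 1) * (z + x)) := by
  rw [kleinPolar, lsum_apply, sum_over_range' p (by simp) _ hp, sum_range_two_mul]
  refine sum_congr rfl fun k _ => ?_
  simp only [LinearMap.mulRight_apply, kleinPolarWeight_two_mul, kleinPolarWeight_two_mul_add_one]
  ring

theorem evenCoeffEval_eq_sum_range (u : R) {p : R[X]} {N : ℕ} (hp : p.natDegree < 2 * N) :
    evenCoeffEval u p = ∑ k ∈ range N, u ^ k * p.coeff (2 * k) := by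
  rw [evenCoeffEval, lsum_apply, sum_over_range' p (by simp) _ hp, sum_range_two_mul]
  refine sum_congr rfl fun k _ => ?_
  simp [Nat.even_add_one, mul_comm]

end CommSemiring

theorem kleinPolar_X_sub_C_mul_X_sub_C_mul {R : Type*} [CommRing R] (x z : R) (h : R[X]) :
    kleinPolar x z ((X - C x) * (X - C z) * h) = -(x - z) ^ 2 * evenCoeffEval (x * z) h := by
  induction h using Polynomial.induction_on' with
  | add p q hp hq => simp only [mul_add, map_add, hp, hq]
  | monomial n c =>
    have hmul : (X - C x) * (X - C z) * monomial n c
        = monomial (n + 2) c - monomial (n + 1) (c * (x + z)) + monomial n (c * (x * z)) := by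
      simp only [← C_mul_X_pow_eq_monomial, map_mul, map_add]; ring
    rw [hmul, map_add, map_sub]
    simp only [kleinPolar_monomial, evenCoeffEval_monomial]
    rcases Nat.even_or_odd' n with ⟨k, rfl | rfl⟩
    · rw [show 2 * k + 2 = 2 * (k + 1) by ring]
      simp only [kleinPolarWeight_two_mul, kleinPolarWeight_two_mul_add_one, even_two_mul,
        if_true, Nat.mul_div_cancel_left k two_pos]
      ring
    · rw [show 2 * k + 1 + 2 = 2 * (k + 1) + 1 by ring, show 2 * k + 1 + 1 = 2 * (k + 1) by ring]
      simp only [kleinPolarWeight_two_mul, kleinPolarWeight_two_mul_add_one,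
        Nat.not_even_two_mul_add_one, if_false]
      ring

end Polynomial

theorem stmt_2_general (g : ℕ) (e : Fin (2*g+1) → ℂ) (he : Function.Injective e)
    (lam : ℕ → ℂ)
    (hlam : ∀ k, lam k = (4 * ∏ m, (X - C (e m)) : Polynomial ℂ).coeff k)
    (F : ℂ → ℂ → ℂ)
    (hF : ∀ x z, F x z = ∑ k ∈ range (g+1), x^k * z^k * (2 * lam (2*k) + lam (2*k+1) * (z + x)))
    (i j : Fin (2*g+1)) (hij : i ≠ j) :
    F (e i) (e j) / (4 * (e i - e j)^2)
      = ∑ n ∈ range g, (e i * e j)^n * esymm ((Finset.univ.erase i).erase j) (2*g - 2*n - 1) e := by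
  set s := (univ.erase i).erase j
  set P := ∏ m ∈ s, (X - C (e m))
  have hj : j ∈ univ.erase i := mem_erase.2 ⟨hij.symm, mem_univ j⟩
  have hcard : #s + 2 = 2 * g + 1 := by
    have h : #s + 1 = #(univ.erase i) := card_erase_add_one hj
    rw [card_erase_of_mem (mem_univ i), card_univ, Fintype.card_fin] at h
    omega
  have hsplit :
      (4 * ∏ m, (X - C (e m)) : ℂ[X]) = (4 : ℂ) • ((X - C (e i)) * (X - C (e j)) * P) := by
    rw [← mul_prod_erase univ _ (mem_univ i), ← mul_prod_erase _ _ hj, smul_eq_C_mul, C_ofNat,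
      mul_assoc (X - C (e i))]
  have hpolar : F (e i) (e j) = kleinPolar (e i) (e j) (4 * ∏ m, (X - C (e m))) := by
    rw [hF, kleinPolar_eq_sum_range (N := g + 1)]
    · simp only [hlam]
    · refine natDegree_mul_le.trans_lt ?_
      simp only [natDegree_ofNat, natDegree_finsetProd_X_sub_C_eq_card, card_univ,
        Fintype.card_fin]
      omega
  have hesymm : ∑ n ∈ range g, (e i * e j) ^ n * esymm s (2 * g - 2 * n - 1) e
      = -evenCoeffEval (e i * e j) P := by
    have hdeg : P.natDegree < 2 * g := by
      rw [natDegree_finsetProd_X_sub_C_eq_card]; omega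
    rw [evenCoeffEval_eq_sum_range _ hdeg, ← sum_neg_distrib]
    refine sum_congr rfl fun n hn => ?_
    rw [mem_range] at hn
    rw [prod_X_sub_C_coeff _ _ (by omega), show #s - 2 * n = 2 * g - 2 * n - 1 by omega,
      Odd.neg_one_pow ⟨g - n - 1, by omega⟩, esymm]
    ring
  have hab : e i - e j ≠ 0 := sub_ne_zero.2 (he.ne hij)
  rw [hesymm, hpolar, hsplit, map_smul, kleinPolar_X_sub_C_mul_X_sub_C_mul, smul_eq_mul,
    div_eq_iff (by simp [hab])]
  ring

theorem stmt_2 (g : ℕ) (hg : 1 ≤ g) (e : Fin (2*g+1) → ℂ) (he : Function.Injective e)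
    (lam : ℕ → ℂ)
    (hlam : ∀ k, lam k = (4 * ∏ m, (X - C (e m)) : Polynomial ℂ).coeff k)
    (F : ℂ → ℂ → ℂ)
    (hF : ∀ x z, F x z = ∑ k ∈ range (g+1), x^k * z^k * (2 * lam (2*k) + lam (2*k+1) * (z + x)))
    (i j : Fin (2*g+1)) (hij : i ≠ j) :
    F (e i) (e j) / (4 * (e i - e j)^2)
      = ∑ n ∈ range g, (e i * e j)^n * esymm ((Finset.univ.erase i).erase j) (2*g - 2*n - 1) e :=
  stmt_2_general g e he lam hlam F hF i j hij
end

section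
/- Let S(u₁,u₂,u₃,u₄) = u₄¹⁰/4725 − u₄⁷u₃/105 + u₂u₄⁵/15 − u₄u₃³ − u₄³u₁/3 + u₂u₃u₄² − u₂² + u₁u₃ be the genus-4 Schur–Weierstraß polynomial S_{4,3,2,1}. Then for every ξ ∈ ℂ, at u(ξ) = (−ξ⁷/7, −ξ⁵/5, −ξ³/3, −ξ): (∂^j S/∂u₄^j)(u(ξ)) = 0 for j = 0, 1, 2. -/
/-!
On the stratum `Θ₁` the point `u₄ = -ξ` is a triple root of the polynomial `t ↦ S(u₁, u₂, u₃, t)`: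
dividing by `(t + ξ)³` leaves no remainder. The first two derivatives of a polynomial vanish at a
triple root, since `(X - a)ⁿ ∣ p` implies `(X - a)ⁿ⁻ʲ ∣ p⁽ʲ⁾`.
-/

open Polynomial

theorem Polynomial.iteratedDeriv_eval {𝕜 : Type*} [NontriviallyNormedField 𝕜] (p : 𝕜[X])
    (n : ℕ) : iteratedDeriv n (fun x => p.eval x) = fun x => (derivative^[n] p).eval x := by
  induction n with
  | zero => simp
  | succ n ih =>
    rw [iteratedDeriv_succ, ih, Function.iterate_succ_apply']
    funext x
    exact Polynomial.deriv _

theorem Polynomial.eval_iterate_derivative_eq_zero_of_pow_dvd {R : Type*} [CommRing R]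
    {p : R[X]} {a : R} {n j : ℕ} (hp : (X - C a) ^ n ∣ p) (hj : j < n) :
    (derivative^[j] p).eval a = 0 :=
  dvd_iff_isRoot.mp <| (dvd_pow_self _ (Nat.sub_ne_zero_of_lt hj)).trans
    (pow_sub_dvd_iterate_derivative_of_pow_dvd j hp)

theorem Polynomial.iteratedDeriv_eval_eq_zero_of_pow_dvd {𝕜 : Type*} [NontriviallyNormedField 𝕜]
    {p : 𝕜[X]} {a : 𝕜} {n j : ℕ} (hp : (X - C a) ^ n ∣ p) (hj : j < n) :
    iteratedDeriv j (fun x => p.eval x) a = 0 := by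
  rw [iteratedDeriv_eval]
  exact eval_iterate_derivative_eq_zero_of_pow_dvd hp hj

/-- The quotient of `S(-ξ⁷/7, -ξ⁵/5, -ξ³/3, t)` by `(t + ξ)³`. -/
noncomputable def thetaOneCofactor (ξ : ℂ) : ℂ[X] :=
  C (1 / 4725) * (X ^ 7 - C (3 * ξ) * X ^ 6 + C (6 * ξ ^ 2) * X ^ 5 + C (5 * ξ ^ 3) * X ^ 4
    - C (30 * ξ ^ 4) * X ^ 3 + C (6 * ξ ^ 5) * X ^ 2 + C (67 * ξ ^ 6) * X + C (36 * ξ ^ 7))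

theorem stmt_14 (S : ℂ → ℂ → ℂ → ℂ → ℂ)
    (hS : ∀ u1 u2 u3 u4, S u1 u2 u3 u4 =
      u4^10/4725 - u4^7*u3/105 + u2*u4^5/15 - u4*u3^3 - u4^3*u1/3 + u2*u3*u4^2 - u2^2 + u1*u3)
    (ξ : ℂ) :
    ∀ j ≤ 2, iteratedDeriv j (fun t => S (-ξ^7/7) (-ξ^5/5) (-ξ^3/3) t) (-ξ) = 0 := by
  intro j hj
  have hfactor : (fun t => S (-ξ^7/7) (-ξ^5/5) (-ξ^3/3) t) =
      fun t => ((X - C (-ξ)) ^ 3 * thetaOneCofactor ξ).eval t := by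
    funext t
    simp only [hS, thetaOneCofactor, eval_mul, eval_pow, eval_sub, eval_add, eval_X, eval_C]
    ring
  rw [hfactor]
  exact iteratedDeriv_eval_eq_zero_of_pow_dvd (dvd_mul_right _ _) (by omega)
end

section
/- Let e₁, …, e₅ be pairwise distinct complex numbers, f(x) = 4∏_{k=1}^{5}(x−e_k), and F the genus-2 Kleinian 2-polar of f. Fix distinct i, j ∈ {1,…,5} and let {p,q,r} be the complementary indices. Then F(e_i,e_j) = 4(e_i−e_j)²·(S₃^{(ij)} + e_ie_j·S₁^{(ij)}), where S₁^{(ij)} = e_p+e_q+e_r and S₃^{(ij)} = e_pe_qe_r. -/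
open Finset Polynomial

lemma quintic (a b c d f : ℂ) :
    (X - C a) * (X - C b) * (X - C c) * (X - C d) * (X - C f)
      = X^5 - C (a+b+c+d+f) * X^4
        + C (a*b+a*c+a*d+a*f+b*c+b*d+b*f+c*d+c*f+d*f) * X^3
        - C (a*b*c+a*b*d+a*b*f+a*c*d+a*c*f+a*d*f+b*c*d+b*c*f+b*d*f+c*d*f) * X^2
        + C (a*b*c*d+a*b*c*f+a*b*d*f+a*c*d*f+b*c*d*f) * X
        - C (a*b*c*d*f) := by
  simp only [map_add, map_mul]
  ring

theorem stmt_19 (e : Fin 5 → ℂ) (he : Function.Injective e)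
    (lam : ℕ → ℂ)
    (hlam : ∀ k, lam k = (4 * ∏ m, (X - C (e m)) : Polynomial ℂ).coeff k)
    (F : ℂ → ℂ → ℂ)
    (hF : ∀ x z, F x z = ∑ k ∈ range 3, x^k * z^k * (2 * lam (2*k) + lam (2*k+1) * (x + z)))
    (i j p q r : Fin 5) (hij : i ≠ j)
    (hpqr : ({p, q, r} : Finset (Fin 5)) = Finset.univ \ {i, j}) :
    F (e i) (e j)
      = 4 * (e i - e j)^2 * (e p * e q * e r + e i * e j * (e p + e q + e r)) := by
  have hp : p ∈ Finset.univ \ ({i, j} : Finset (Fin 5)) := by rw [← hpqr]; simp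
  have hq : q ∈ Finset.univ \ ({i, j} : Finset (Fin 5)) := by rw [← hpqr]; simp
  have hr : r ∈ Finset.univ \ ({i, j} : Finset (Fin 5)) := by rw [← hpqr]; simp
  simp only [Finset.mem_sdiff, Finset.mem_insert, Finset.mem_singleton] at hp hq hr
  have hpi : p ≠ i := fun h => hp.2 (Or.inl h)
  have hpj : p ≠ j := fun h => hp.2 (Or.inr h)
  have hqi : q ≠ i := fun h => hq.2 (Or.inl h)
  have hqj : q ≠ j := fun h => hq.2 (Or.inr h)
  have hri : r ≠ i := fun h => hr.2 (Or.inl h)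
  have hrj : r ≠ j := fun h => hr.2 (Or.inr h)
  have hcard : ({p, q, r} : Finset (Fin 5)).card = 3 := by
    rw [hpqr, Finset.card_sdiff_of_subset (by simp)]
    simp [Finset.card_pair hij]
  have hdist : ∀ x y z : Fin 5, ({x, y, z} : Finset (Fin 5)) = {p, q, r} → x ≠ y := by
    intro x y z hxyz h
    have hsub : ({p, q, r} : Finset (Fin 5)) ⊆ {y, z} := by
      rw [← hxyz]
      intro t ht
      simp only [Finset.mem_insert, Finset.mem_singleton] at ht ⊢
      rcases ht with h1 | h1 | h1 <;> simp [h1, h]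
    have hle := Finset.card_le_card hsub
    have h2 := Finset.card_insert_le y ({z} : Finset (Fin 5))
    simp only [Finset.card_singleton] at h2
    omega
  have hpq : p ≠ q := hdist p q r rfl
  have hqr : q ≠ r := hdist q r p (by ext x; simp; tauto)
  have hpr : p ≠ r := hdist p r q (by ext x; simp; tauto)
  have huniv : (Finset.univ : Finset (Fin 5)) = {i, j, p, q, r} := by
    have h : ({i, j} : Finset (Fin 5)) ∪ {p, q, r} = Finset.univ := by
      rw [hpqr, Finset.union_sdiff_of_subset (by simp)]
    rw [← h]; ext x; simp; tauto
  have hprod : (∏ m, (X - C (e m)) : Polynomial ℂ)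
      = (X - C (e i)) * (X - C (e j)) * (X - C (e p)) * (X - C (e q)) * (X - C (e r)) := by
    rw [huniv,
        Finset.prod_insert (by simp [hij, hpi.symm, hqi.symm, hri.symm]),
        Finset.prod_insert (by simp [hpj.symm, hqj.symm, hrj.symm]),
        Finset.prod_insert (by simp [hpq, hpr]),
        Finset.prod_insert (by simp [hqr]),
        Finset.prod_singleton]
    ring
  set a := e i; set b := e j; set c := e p; set d := e q; set f := e r
  have key : ∀ k, lam k
      = 4 * ((X^5 - C (a+b+c+d+f) * X^4
        + C (a*b+a*c+a*d+a*f+b*c+b*d+b*f+c*d+c*f+d*f) * X^3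
        - C (a*b*c+a*b*d+a*b*f+a*c*d+a*c*f+a*d*f+b*c*d+b*c*f+b*d*f+c*d*f) * X^2
        + C (a*b*c*d+a*b*c*f+a*b*d*f+a*c*d*f+b*c*d*f) * X
        - C (a*b*c*d*f)) : Polynomial ℂ).coeff k := by
    intro k
    rw [hlam k, hprod, quintic, (map_ofNat Polynomial.C 4).symm,
      Polynomial.coeff_C_mul]
  have h0 : lam 0 = -4 * (a*b*c*d*f) := by
    rw [key 0]; simp only [coeff_add, coeff_sub, Polynomial.coeff_C_mul, Polynomial.coeff_X_pow, Polynomial.coeff_C, Polynomial.coeff_X]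
    norm_num
    try ring
  have h1 : lam 1 = 4 * (a*b*c*d+a*b*c*f+a*b*d*f+a*c*d*f+b*c*d*f) := by
    rw [key 1]; simp only [coeff_add, coeff_sub, Polynomial.coeff_C_mul, Polynomial.coeff_X_pow, Polynomial.coeff_C, Polynomial.coeff_X]
    norm_num
    try ring
  have h2 : lam 2 = -4 * (a*b*c+a*b*d+a*b*f+a*c*d+a*c*f+a*d*f+b*c*d+b*c*f+b*d*f+c*d*f) := by
    rw [key 2]; simp only [coeff_add, coeff_sub, Polynomial.coeff_C_mul, Polynomial.coeff_X_pow, Polynomial.coeff_C, Polynomial.coeff_X]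
    norm_num
    try ring
  have h3 : lam 3 = 4 * (a*b+a*c+a*d+a*f+b*c+b*d+b*f+c*d+c*f+d*f) := by
    rw [key 3]; simp only [coeff_add, coeff_sub, Polynomial.coeff_C_mul, Polynomial.coeff_X_pow, Polynomial.coeff_C, Polynomial.coeff_X]
    norm_num
    try ring
  have h4 : lam 4 = -4 * (a+b+c+d+f) := by
    rw [key 4]; simp only [coeff_add, coeff_sub, Polynomial.coeff_C_mul, Polynomial.coeff_X_pow, Polynomial.coeff_C, Polynomial.coeff_X]
    norm_num
    try ring
  have h5 : lam 5 = 4 := by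
    rw [key 5]; simp only [coeff_add, coeff_sub, Polynomial.coeff_C_mul, Polynomial.coeff_X_pow, Polynomial.coeff_C, Polynomial.coeff_X]
    norm_num
    try ring
  rw [hF]
  rw [Finset.sum_range_succ, Finset.sum_range_succ, Finset.sum_range_one]
  norm_num [h0, h1, h2, h3, h4, h5]
  ring
end
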